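/- Let 𝒢 be an e-graph, G its converted circuit, and α a minimal satisfying evaluation of G. Then the extraction φ_α (defined by C ∈ dom(φ_α) and φ_α(C) = u iff u ∈ C and α(∧_u) = 1) is minimally satisfying: for every proper subset 𝒜 ⊊ dom(φ_α), the restriction φ_α|_𝒜 is not a satisfying extraction of 𝒢. -/
import Mathlib


/-- Gate types for a monotone circuit. -/
inductive Gate where
  | AND : Gate
  | OR : Gate
deriving DecidableEq

/-- A weighted cyclic monotone circuit: a directed graph with a set of outputs,
a gate-type function, and a cost function (costs are only meaningful on inputs). -/
structure Circuit (V : Type) where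
  edge : V → V → Prop
  isOut : V → Prop
  gate : V → Gate
  cost : V → ℝ

namespace Circuit

variable {V : Type}

/-- The inputs are the vertices of in-degree 0. -/
def IsInput (G : Circuit V) (u : V) : Prop := ∀ v, ¬ G.edge v u

/-- A valid evaluation: each non-input gate evaluates to its gate function applied to
the values of its in-neighbors. -/
def Valid (G : Circuit V) (α : V → Bool) : Prop :=
  ∀ u : V, ¬ G.IsInput u →
    (α u = true ↔
      match G.gate u with
      | Gate.AND => ∀ v, G.edge v u → α v = true
      | Gate.OR => ∃ v, G.edge v u ∧ α v = true)

/-- An evaluation satisfies the circuit if it is 1 on all outputs. -/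
def Satisfies (G : Circuit V) (α : V → Bool) : Prop :=
  ∀ u, G.isOut u → α u = true

/-- The restriction `α|_A`: equal to `α` on `A` and `0` (false) elsewhere. -/
noncomputable def restrict (α : V → Bool) (A : Set V) : V → Bool :=
  fun u => @ite _ (u ∈ A) (Classical.propDecidable _) (α u) false

/-- A minimal satisfying evaluation: valid, satisfying, and no restriction of its
true set to a proper subset is a valid satisfying evaluation. -/
def MinSat (G : Circuit V) (α : V → Bool) : Prop :=
  G.Valid α ∧ G.Satisfies α ∧
    ∀ A : Set V, A ⊂ {u | α u = true} →
      ¬ (G.Valid (restrict α A) ∧ G.Satisfies (restrict α A))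

/-- `α` is acyclic if the subgraph `G[α]` induced by the true vertices has no
directed cycle. -/
def EvalAcyclic (G : Circuit V) (α : V → Bool) : Prop :=
  ∀ u, ¬ Relation.TransGen (fun a b => G.edge a b ∧ α a = true ∧ α b = true) u u

end Circuit

/-- An e-graph: a finite set `N` of e-nodes partitioned into e-classes (indexed by the
type `C`, via the surjective class map `cls`), a dependency relation `edge ⊆ N × C`,
a set of output classes, and a cost function. -/
structure EGraph (N C : Type) where
  cls : N → C
  surj : Function.Surjective cls
  edge : N → C → Prop
  isOut : C → Prop
  cost : N → ℝ

namespace EGraph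

variable {N C : Type}

/-- An extraction, modeled as a partial function `C → Option N`: a choice function
(on its domain) closed under dependencies. -/
def IsExtraction (𝒢 : EGraph N C) (φ : C → Option N) : Prop :=
  (∀ D u, φ D = some u → 𝒢.cls u = D) ∧
  (∀ D u D', φ D = some u → 𝒢.edge u D' → (φ D').isSome)

/-- A satisfying extraction: an extraction whose domain contains all output classes. -/
def SatExtraction (𝒢 : EGraph N C) (φ : C → Option N) : Prop :=
  𝒢.IsExtraction φ ∧ ∀ D, 𝒢.isOut D → (φ D).isSome

/-- The restriction `φ|_𝒜` of an extraction to a set of classes. -/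
noncomputable def restrictExt (φ : C → Option N) (𝒜 : Set C) : C → Option N :=
  fun D => @ite _ (D ∈ 𝒜) (Classical.propDecidable _) (φ D) none

/-- A minimally satisfying extraction: satisfying, and no restriction to a proper
subset of its domain is a satisfying extraction. -/
def MinSatExtraction (𝒢 : EGraph N C) (φ : C → Option N) : Prop :=
  𝒢.SatExtraction φ ∧
    ∀ 𝒜 : Set C, 𝒜 ⊂ {D | (φ D).isSome = true} →
      ¬ 𝒢.SatExtraction (restrictExt φ 𝒜)

/-- An extraction is acyclic if there is no (nontrivial) selected path from a class
to itself. -/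
def ExtAcyclic (𝒢 : EGraph N C) (φ : C → Option N) : Prop :=
  ∀ D, ¬ Relation.TransGen (fun D₁ D₂ => ∃ u, φ D₁ = some u ∧ 𝒢.edge u D₂) D D

/-- Vertices of the converted circuit: an input `x_u` and an AND gate `∧_u` for each
e-node `u`, and an OR gate `∨_D` for each e-class `D`. -/
inductive Vtx (N C : Type) where
  | x : N → Vtx N C
  | and : N → Vtx N C
  | or : C → Vtx N C

/-- The converted circuit of an e-graph: edges `(∧_u, ∨_D)` for `u ∈ D`,
`(∨_D, ∧_u)` for `(u, D) ∈ ℰ`, and `(x_u, ∧_u)`; outputs `∨_D` for output classes `D`;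
gate types AND on `∧_u`, OR on `∨_D`; cost `c(x_u) = c(u)`. -/
def conv (𝒢 : EGraph N C) : Circuit (Vtx N C) where
  edge a b :=
    match a, b with
    | .and u, .or D => 𝒢.cls u = D
    | .or D, .and u => 𝒢.edge u D
    | .x u, .and v => u = v
    | _, _ => False
  isOut a :=
    match a with
    | .or D => 𝒢.isOut D
    | _ => False
  gate a :=
    match a with
    | .or _ => Gate.OR
    | _ => Gate.AND
  cost a :=
    match a with
    | .x u => 𝒢.cost u
    | _ => 0

/-- The evaluation `α_φ` associated to an extraction `φ`:
`α_φ(x_u) = α_φ(∧_u) = 1` iff `φ(cls u) = u`, and `α_φ(∨_D) = 1` iff `D ∈ dom φ`. -/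
noncomputable def evalOf (𝒢 : EGraph N C) (φ : C → Option N) : Vtx N C → Bool :=
  fun a =>
    match a with
    | .x u => @decide (φ (𝒢.cls u) = some u) (Classical.propDecidable _)
    | .and u => @decide (φ (𝒢.cls u) = some u) (Classical.propDecidable _)
    | .or D => (φ D).isSome

/-- The extraction `φ_α` associated to an evaluation `α`:
`D ∈ dom φ_α` and `φ_α(D) = u` iff `u ∈ D` and `α(∧_u) = 1`. -/
noncomputable def extOf (𝒢 : EGraph N C) (α : Vtx N C → Bool) : C → Option N :=
  fun D =>
    @dite _ (∃ u, 𝒢.cls u = D ∧ α (Vtx.and u) = true) (Classical.propDecidable _)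
      (fun h => some h.choose) (fun _ => none)

end EGraph


namespace EGraph

variable {N C : Type}

lemma notInput_and (𝒢 : EGraph N C) (u : N) : ¬ (𝒢.conv).IsInput (Vtx.and u) := by
  intro h
  exact h (Vtx.x u) (by simp [conv])

lemma notInput_or (𝒢 : EGraph N C) (D : C) : ¬ (𝒢.conv).IsInput (Vtx.or D) := by
  obtain ⟨u, hu⟩ := 𝒢.surj D
  intro h
  exact h (Vtx.and u) (by simpa [conv] using hu)

lemma input_x (𝒢 : EGraph N C) (u : N) : (𝒢.conv).IsInput (Vtx.x u) := by
  intro v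
  cases v <;> simp [conv]

lemma or_iff (𝒢 : EGraph N C) {α : Vtx N C → Bool} (hval : (𝒢.conv).Valid α) (D : C) :
    α (Vtx.or D) = true ↔ ∃ u, 𝒢.cls u = D ∧ α (Vtx.and u) = true := by
  rw [hval (Vtx.or D) (𝒢.notInput_or D)]
  constructor
  · rintro ⟨v, hv, hvt⟩
    match v with
    | Vtx.and u => exact ⟨u, hv, hvt⟩
  · rintro ⟨u, hu, hut⟩
    exact ⟨Vtx.and u, hu, hut⟩

lemma and_iff (𝒢 : EGraph N C) {α : Vtx N C → Bool} (hval : (𝒢.conv).Valid α) (u : N) :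
    α (Vtx.and u) = true ↔
      α (Vtx.x u) = true ∧ ∀ D, 𝒢.edge u D → α (Vtx.or D) = true := by
  rw [hval (Vtx.and u) (𝒢.notInput_and u)]
  constructor
  · intro h
    exact ⟨h (Vtx.x u) (by simp [conv]), fun D hD => h (Vtx.or D) (by simpa [conv] using hD)⟩
  · rintro ⟨hx, ho⟩ v hv
    match v with
    | Vtx.x w => obtain rfl : w = u := hv; exact hx
    | Vtx.or D => exact ho D hv

lemma evalOf_valid (𝒢 : EGraph N C) (ψ : C → Option N) (h : 𝒢.IsExtraction ψ) :
    (𝒢.conv).Valid (𝒢.evalOf ψ) := by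
  intro v hv
  match v with
  | Vtx.x u => exact absurd (𝒢.input_x u) hv
  | Vtx.and u =>
    show (𝒢.evalOf ψ (Vtx.and u) = true) ↔ ∀ w, (𝒢.conv).edge w (Vtx.and u) → 𝒢.evalOf ψ w = true
    constructor
    · intro hu w hw
      have hu' : ψ (𝒢.cls u) = some u := by simpa [evalOf] using hu
      match w with
      | Vtx.x w' =>
        obtain rfl : w' = u := hw
        simpa [evalOf] using hu'
      | Vtx.or D =>
        have : 𝒢.edge u D := hw
        simpa [evalOf] using h.2 _ u D hu' this
    · intro hw
      have := hw (Vtx.x u) (by simp [conv])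
      simpa [evalOf] using this
  | Vtx.or D =>
    show (𝒢.evalOf ψ (Vtx.or D) = true) ↔ ∃ w, (𝒢.conv).edge w (Vtx.or D) ∧ 𝒢.evalOf ψ w = true
    constructor
    · intro hD
      have : (ψ D).isSome := by simpa [evalOf] using hD
      obtain ⟨u, hu⟩ := Option.isSome_iff_exists.mp this
      have hcls : 𝒢.cls u = D := h.1 D u hu
      refine ⟨Vtx.and u, by simpa [conv] using hcls, ?_⟩
      simp [evalOf, hcls, hu]
    · rintro ⟨w, hw, hwt⟩
      match w with
      | Vtx.and u =>
        have hcls : 𝒢.cls u = D := hw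
        have : ψ (𝒢.cls u) = some u := by simpa [evalOf] using hwt
        rw [hcls] at this
        simp [evalOf, this]

lemma evalOf_sat (𝒢 : EGraph N C) (ψ : C → Option N) (h : 𝒢.SatExtraction ψ) :
    (𝒢.conv).Satisfies (𝒢.evalOf ψ) := by
  intro v hv
  match v with
  | Vtx.or D =>
    have : 𝒢.isOut D := hv
    simpa [evalOf] using h.2 D this

end EGraph

/-- for a minimal satisfying evaluation `α` of the converted circuit, the
extraction `φ_α` is minimally satisfying: no restriction to a proper subset of its
domain is a satisfying extraction. -/
theorem stmt8 {N C : Type} [Fintype N] [Fintype C] (𝒢 : EGraph N C)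
    (α : EGraph.Vtx N C → Bool) (hα : (𝒢.conv).MinSat α)
    (φ : C → Option N)
    (hchar : ∀ (D : C) (u : N),
      φ D = some u ↔ 𝒢.cls u = D ∧ α (EGraph.Vtx.and u) = true) :
    𝒢.MinSatExtraction φ := by
  obtain ⟨hval, hsat, hmin⟩ := hα
  have hand_x : ∀ u : N, α (EGraph.Vtx.and u) = true → α (EGraph.Vtx.x u) = true :=
    fun u hu => ((𝒢.and_iff hval u).mp hu).1
  have hdom : ∀ D : C, (φ D).isSome = true ↔ α (EGraph.Vtx.or D) = true := by
    intro D
    rw [Option.isSome_iff_exists, 𝒢.or_iff hval D]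
    constructor
    · rintro ⟨u, hu⟩
      exact ⟨u, (hchar D u).mp hu⟩
    · rintro ⟨u, hu⟩
      exact ⟨u, (hchar D u).mpr hu⟩
  have hext : 𝒢.SatExtraction φ := by
    refine ⟨⟨fun D u h => ((hchar D u).mp h).1, ?_⟩, ?_⟩
    · intro D u D' h he
      have hu : α (EGraph.Vtx.and u) = true := ((hchar D u).mp h).2
      have := ((𝒢.and_iff hval u).mp hu).2 D' he
      exact (hdom D').mpr this
    · intro D hD
      exact (hdom D).mpr (hsat (EGraph.Vtx.or D) hD)
  refine ⟨hext, ?_⟩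
  rintro 𝒜 h𝒜 ⟨hψext, hψsat⟩
  set ψ := EGraph.restrictExt φ 𝒜 with hψ
  have hψle : ∀ D u, ψ D = some u → φ D = some u := by
    intro D u h
    by_cases hD : D ∈ 𝒜
    · simpa [hψ, EGraph.restrictExt, hD] using h
    · simp [hψ, EGraph.restrictExt, hD] at h
  set β := 𝒢.evalOf ψ with hβ
  have hβα : ∀ v, β v = true → α v = true := by
    intro v hv
    match v with
    | EGraph.Vtx.x u =>
      have : ψ (𝒢.cls u) = some u := by simpa [hβ, EGraph.evalOf] using hv
      exact hand_x u ((hchar _ u).mp (hψle _ u this)).2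
    | EGraph.Vtx.and u =>
      have : ψ (𝒢.cls u) = some u := by simpa [hβ, EGraph.evalOf] using hv
      exact ((hchar _ u).mp (hψle _ u this)).2
    | EGraph.Vtx.or D =>
      have : (ψ D).isSome = true := by simpa [hβ, EGraph.evalOf] using hv
      obtain ⟨u, hu⟩ := Option.isSome_iff_exists.mp this
      have := hψle D u hu
      exact (hdom D).mp (by simp [this])
  set A : Set (EGraph.Vtx N C) := {v | β v = true} with hA
  have hAsub : A ⊂ {v | α v = true} := by
    constructor
    · intro v hv
      exact hβα v hv
    · intro hcon
      obtain ⟨D₀, hD₀mem, hD₀not⟩ := Set.exists_of_ssubset h𝒜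
      have hα₀ : α (EGraph.Vtx.or D₀) = true := (hdom D₀).mp hD₀mem
      have : β (EGraph.Vtx.or D₀) = true := hcon hα₀
      have : (ψ D₀).isSome = true := by simpa [hβ, EGraph.evalOf] using this
      rw [hψ] at this
      simp [EGraph.restrictExt, hD₀not] at this
  have heq : Circuit.restrict α A = β := by
    funext v
    by_cases hv : v ∈ A
    · have hb : β v = true := hv
      simp [Circuit.restrict, hv, hβα v hb, hb]
    · have hb : ¬ β v = true := hv
      simp [Circuit.restrict, hv, eq_comm, hb]
  refine hmin A hAsub ⟨?_, ?_⟩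
  · rw [heq]; exact 𝒢.evalOf_valid ψ hψext
  · rw [heq]; exact 𝒢.evalOf_sat ψ ⟨hψext, hψsat⟩
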